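/- Let k = F_q with q even (characteristic 2), and fix δ ∈ F_q not of the form x² + x. For partitions data (μ, ν) ∈ Δ = {(μ,ν) : |μ|+|ν| = n, ν_i ≤ μ_i + 1}, associate to each (μ,ν) with k = #{i : μ_{i+1}+1 ≤ ν_i < μ_i+1} the 2^k pairs of partitions obtained by swapping blocks (μ^{1,i},ν^{1,i}) ↔ (ν^{1,i}−1, μ^{1,i}+1) as in the construction. Then the resulting set of pairs of partitions, over all (μ,ν) ∈ Δ, is exactly {(μ,ν) : |μ|+|ν| = n}, and in particular has cardinality p₂(n). -/

import Mathlib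

/-- A partition encoded as a weakly decreasing function `ℕ → ℕ` with finitely many
nonzero parts (zero-padded). -/
def IsPartitionFun (f : ℕ → ℕ) : Prop :=
  Antitone f ∧ ∃ N, ∀ i, N ≤ i → f i = 0

/-- Pairs of partitions of total size `n`. -/
def PartitionPairs (n : ℕ) : Set ((ℕ → ℕ) × (ℕ → ℕ)) :=
  {p | IsPartitionFun p.1 ∧ IsPartitionFun p.2 ∧
    (∑ᶠ i, p.1 i) + (∑ᶠ i, p.2 i) = n}

/-- `Δ`: pairs of partitions `(μ,ν)` of total size `n` with `νᵢ ≤ μᵢ + 1` (0-based: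
`p.1 i = μ_{i+1}`, `p.2 i = ν_{i+1}`). -/
def DeltaSet (n : ℕ) : Set ((ℕ → ℕ) × (ℕ → ℕ)) :=
  {p ∈ PartitionPairs n | ∀ i, p.2 i ≤ p.1 i + 1}

/-- The set of indices `i` with `μ_{i+1} + 1 ≤ νᵢ < μᵢ + 1` (0-based). -/
def SwapIndices (μ ν : ℕ → ℕ) : Set ℕ :=
  {i | μ (i + 1) + 1 ≤ ν i ∧ ν i < μ i + 1}

open scoped Classical

/-- Block-swap construction: given a choice `ε` of swap/keep for each swap index
`r ∈ SwapIndices μ ν` (blocks being the maximal segments `(r_{i-1}, r_i]`), index `j`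
belongs to the block of the least swap index `≥ j`; on swapped blocks `(μⱼ,νⱼ)` is
replaced by `(νⱼ − 1, μⱼ + 1)`, and indices beyond the last swap index are kept. -/
noncomputable def blockSwap (μ ν : ℕ → ℕ) (ε : {i // i ∈ SwapIndices μ ν} → Bool) :
    (ℕ → ℕ) × (ℕ → ℕ) :=
  (fun j =>
    if h : (SwapIndices μ ν ∩ Set.Ici j).Nonempty then
      (if ε ⟨sInf (SwapIndices μ ν ∩ Set.Ici j), (Nat.sInf_mem h).1⟩ then ν j - 1 else μ j)
    else μ j,
   fun j =>
    if h : (SwapIndices μ ν ∩ Set.Ici j).Nonempty then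
      (if ε ⟨sInf (SwapIndices μ ν ∩ Set.Ici j), (Nat.sInf_mem h).1⟩ then μ j + 1 else ν j)
    else ν j)

/-- `p₂ m` = number of pairs of partitions of total size `m`, as a convolution of the
partition counting function. -/
def numPartitionPairs (n : ℕ) : ℕ :=
  ∑ k ∈ Finset.range (n + 1), Fintype.card (Nat.Partition k) * Fintype.card (Nat.Partition (n - k))

/-!
Columnwise, a swap replaces `(μⱼ, νⱼ)` by `(νⱼ - 1, μⱼ + 1)`. As `νⱼ ≤ μⱼ + 1`, the new column
has second entry at least first entry `+ 2` exactly when it was swapped with `νⱼ ≤ μⱼ`, and a swap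
with `νⱼ = μⱼ + 1` changes nothing. Hence `unswap`, which undoes the swap on the columns with
`g ≥ f + 2`, recovers `(μ, ν)` from each of its block swaps, and the choice `ε` is read off at the
swap indices, where `νᵣ ≤ μᵣ`.

Conversely, for a pair `(f, g)` of partitions put `(μ, ν) = unswap (f, g)` and swap the block
ending at `r` iff `gᵣ ≥ fᵣ + 2`. Between two swap indices both `g ≥ f + 2` and `g ≤ f` pass from
one column to the next, so every column of a swapped block has `g ≥ f + 1` and every column of a
kept block has `g ≤ f + 1`; this is exactly what is needed for the block swap to return `(f, g)`.
The inequalities defining a swap index are what keep both components weakly decreasing across a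
block boundary, whichever way its two blocks are chosen.
-/

namespace BlockSwap

open Function Finset

lemma finsum_add_finsum_eq_of_add_eq {f g f' g' : ℕ → ℕ} (hf : HasFiniteSupport f)
    (hg : HasFiniteSupport g) (h : ∀ i, f' i + g' i = f i + g i) :
    ∑ᶠ i, f' i + ∑ᶠ i, g' i = ∑ᶠ i, f i + ∑ᶠ i, g i := by
  have hsupp : support f' ∪ support g' ⊆ support f ∪ support g := by
    intro i hi
    by_contra hi'
    simp only [Set.mem_union, mem_support, not_or, not_not] at hi hi'
    have := h i
    omega
  have hfin := (hf.union hg).subset hsupp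
  rw [← finsum_add_distrib (hfin.subset Set.subset_union_left)
    (hfin.subset Set.subset_union_right), ← finsum_add_distrib hf hg]
  exact finsum_congr h

lemma hasFiniteSupport_of_isPartitionFun {f : ℕ → ℕ} (hf : IsPartitionFun f) :
    HasFiniteSupport f := by
  obtain ⟨-, N, hN⟩ := hf
  refine (Set.finite_Iio N).subset fun i hi => ?_
  by_contra hiN
  exact hi (hN i (not_lt.1 hiN))

lemma mem_partitionPairs_of_add_eq {n : ℕ} {p q : (ℕ → ℕ) × (ℕ → ℕ)}
    (hp : p ∈ PartitionPairs n) (hq₁ : Antitone q.1) (hq₂ : Antitone q.2)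
    (h : ∀ i, q.1 i + q.2 i = p.1 i + p.2 i) : q ∈ PartitionPairs n := by
  obtain ⟨⟨-, N₁, hN₁⟩, ⟨-, N₂, hN₂⟩, hsum⟩ := id hp
  have hzero : ∀ i, max N₁ N₂ ≤ i → q.1 i = 0 ∧ q.2 i = 0 := fun i hi => by
    have := h i
    have := hN₁ i (le_of_max_le_left hi)
    have := hN₂ i (le_of_max_le_right hi)
    omega
  refine ⟨⟨hq₁, _, fun i hi => (hzero i hi).1⟩, ⟨hq₂, _, fun i hi => (hzero i hi).2⟩, ?_⟩
  rw [finsum_add_finsum_eq_of_add_eq (hasFiniteSupport_of_isPartitionFun hp.1)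
    (hasFiniteSupport_of_isPartitionFun hp.2.1) h, hsum]

section Blocks

variable {μ ν : ℕ → ℕ} (ε : {i // i ∈ SwapIndices μ ν} → Bool)

def IsSwapped (j : ℕ) : Prop :=
  ∃ r : {i // i ∈ SwapIndices μ ν}, IsLeast (SwapIndices μ ν ∩ Set.Ici j) r ∧ ε r = true

lemma isSwapped_iff_exists_sInf {j : ℕ} :
    IsSwapped ε j ↔ ∃ h : (SwapIndices μ ν ∩ Set.Ici j).Nonempty,
      ε ⟨sInf (SwapIndices μ ν ∩ Set.Ici j), (Nat.sInf_mem h).1⟩ = true := by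
  constructor
  · rintro ⟨r, hr, hεr⟩
    refine ⟨⟨r, hr.1⟩, ?_⟩
    rwa [show (⟨_, _⟩ : {i // i ∈ SwapIndices μ ν}) = r from Subtype.ext hr.csInf_eq]
  · rintro ⟨h, hε⟩
    exact ⟨_, isLeast_csInf h, hε⟩

lemma blockSwap_eq : blockSwap μ ν ε =
    (fun j => if IsSwapped ε j then ν j - 1 else μ j,
     fun j => if IsSwapped ε j then μ j + 1 else ν j) := by
  unfold blockSwap
  congr 1 <;> funext j <;> by_cases h : (SwapIndices μ ν ∩ Set.Ici j).Nonempty <;>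
    simp [h, isSwapped_iff_exists_sInf]

lemma isSwapped_iff_of_mem {r : ℕ} (hr : r ∈ SwapIndices μ ν) :
    IsSwapped ε r ↔ ε ⟨r, hr⟩ = true := by
  have hleast : IsLeast (SwapIndices μ ν ∩ Set.Ici r) r :=
    ⟨⟨hr, Set.mem_Ici.2 le_rfl⟩, fun _ ht => ht.2⟩
  constructor
  · rintro ⟨s, hs, hεs⟩
    rwa [show (⟨r, hr⟩ : {i // i ∈ SwapIndices μ ν}) = s from Subtype.ext (hleast.unique hs)]
  · exact fun hε => ⟨⟨r, hr⟩, hleast, hε⟩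

lemma isSwapped_succ_iff {j : ℕ} (hj : j ∉ SwapIndices μ ν) :
    IsSwapped ε (j + 1) ↔ IsSwapped ε j := by
  have hblock : SwapIndices μ ν ∩ Set.Ici (j + 1) = SwapIndices μ ν ∩ Set.Ici j := by
    ext t
    refine ⟨fun ht => ⟨ht.1, Nat.le_of_succ_le ht.2⟩, fun ht => ⟨ht.1, ?_⟩⟩
    exact Nat.succ_le_of_lt (lt_of_le_of_ne ht.2 fun e => hj (e ▸ ht.1))
  simp only [IsSwapped, hblock]

lemma IsSwapped.one_le (hν : Antitone ν) {j : ℕ} (h : IsSwapped ε j) : 1 ≤ ν j := by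
  obtain ⟨r, ⟨⟨hrS, hjr⟩, -⟩, -⟩ := h
  exact (Nat.le_add_left 1 _).trans (hrS.1.trans (hν hjr))

end Blocks

def unswap (p : (ℕ → ℕ) × (ℕ → ℕ)) : (ℕ → ℕ) × (ℕ → ℕ) :=
  (fun i => if p.1 i + 2 ≤ p.2 i then p.2 i - 1 else p.1 i,
   fun i => if p.1 i + 2 ≤ p.2 i then p.1 i + 1 else p.2 i)

def swapChoice (p : (ℕ → ℕ) × (ℕ → ℕ)) (r : ℕ) : Bool := decide (p.1 r + 2 ≤ p.2 r)

section Forward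

variable {μ ν : ℕ → ℕ} (ε : {i // i ∈ SwapIndices μ ν} → Bool)

lemma blockSwap_add (hν : Antitone ν) (j : ℕ) :
    (blockSwap μ ν ε).1 j + (blockSwap μ ν ε).2 j = μ j + ν j := by
  rw [blockSwap_eq]
  by_cases h : IsSwapped ε j
  · have := h.one_le ε hν
    simp only [h, if_true]
    omega
  · simp only [h, if_false]

lemma unswap_blockSwap (hν : Antitone ν) (hΔ : ∀ i, ν i ≤ μ i + 1) :
    unswap (blockSwap μ ν ε) = (μ, ν) := by
  rw [blockSwap_eq]
  ext j <;> have := hΔ j <;> by_cases h : IsSwapped ε j <;>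
    simp only [unswap, h, if_true, if_false] <;> (try have := h.one_le ε hν) <;>
    split_ifs <;> omega

lemma swapChoice_blockSwap (hν : Antitone ν) {r : ℕ} (hr : r ∈ SwapIndices μ ν) :
    swapChoice (blockSwap μ ν ε) r = ε ⟨r, hr⟩ := by
  have hΔr := hr.2
  have := hν (Nat.le_succ r)
  rw [swapChoice, blockSwap_eq, Bool.eq_iff_iff, decide_eq_true_iff, ← isSwapped_iff_of_mem]
  by_cases h : IsSwapped ε r
  · have := h.one_le ε hν
    simp only [h, if_true, iff_true]
    omega
  · simp only [h, if_false, iff_false]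
    omega

lemma antitone_blockSwap (hμ : Antitone μ) (hν : Antitone ν) (hΔ : ∀ i, ν i ≤ μ i + 1) :
    Antitone (blockSwap μ ν ε).1 ∧ Antitone (blockSwap μ ν ε).2 := by
  rw [blockSwap_eq]
  constructor <;> refine antitone_nat_of_succ_le fun j => ?_
  all_goals
    have := hμ (Nat.le_add_right j 1)
    have := hν (Nat.le_add_right j 1)
    have := hΔ j
    dsimp only
    by_cases hj : j ∈ SwapIndices μ ν
    · have := hj.1
      have := hj.2
      split_ifs <;> omega
    · rw [isSwapped_succ_iff ε hj]
      split_ifs <;> omega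

lemma blockSwap_mem_partitionPairs {n : ℕ} (hp : (μ, ν) ∈ DeltaSet n) :
    blockSwap μ ν ε ∈ PartitionPairs n :=
  have hanti := antitone_blockSwap ε hp.1.1.1 hp.1.2.1.1 hp.2
  mem_partitionPairs_of_add_eq hp.1 hanti.1 hanti.2 (blockSwap_add ε hp.1.2.1.1)

end Forward

lemma propagate_of_mem_lowerBounds {S : Set ℕ} {P : ℕ → Prop}
    (hstep : ∀ t ∉ S, P t → P (t + 1)) {j r : ℕ} (hjr : j ≤ r)
    (hr : r ∈ lowerBounds (S ∩ Set.Ici j)) (hj : P j) : P r := by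
  induction r, hjr using Nat.le_induction with
  | base => exact hj
  | succ r hjr ih =>
    have hrS : r ∉ S := fun hrS => by
      have := hr ⟨hrS, hjr⟩
      omega
    exact hstep r hrS (ih fun t ht => (Nat.le_succ r).trans (hr ht))

section Backward

variable {p : (ℕ → ℕ) × (ℕ → ℕ)}

lemma unswap_add (p : (ℕ → ℕ) × (ℕ → ℕ)) (i : ℕ) :
    (unswap p).1 i + (unswap p).2 i = p.1 i + p.2 i := by
  simp only [unswap]
  split_ifs <;> omega

lemma antitone_unswap (h₁ : Antitone p.1) (h₂ : Antitone p.2) :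
    Antitone (unswap p).1 ∧ Antitone (unswap p).2 := by
  constructor <;> refine antitone_nat_of_succ_le fun j => ?_ <;>
    have := h₁ (Nat.le_add_right j 1) <;> have := h₂ (Nat.le_add_right j 1) <;>
    simp only [unswap] <;> split_ifs <;> omega

lemma unswap_mem_deltaSet {n : ℕ} (hp : p ∈ PartitionPairs n) : unswap p ∈ DeltaSet n := by
  have hanti := antitone_unswap hp.1.1 hp.2.1.1
  refine ⟨mem_partitionPairs_of_add_eq hp hanti.1 hanti.2 (unswap_add p), fun i => ?_⟩
  simp only [unswap]
  split_ifs <;> omega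

lemma add_two_le_succ_of_notMem_swapIndices_unswap (h₁ : Antitone p.1) {t : ℕ}
    (hS : t ∉ SwapIndices (unswap p).1 (unswap p).2) (ht : p.1 t + 2 ≤ p.2 t) :
    p.1 (t + 1) + 2 ≤ p.2 (t + 1) := by
  have := h₁ (Nat.le_add_right t 1)
  by_contra ht'
  simp only [SwapIndices, Set.mem_ofPred_eq, unswap, if_pos ht, if_neg ht'] at hS
  omega

lemma le_succ_of_notMem_swapIndices_unswap (h₂ : Antitone p.2) {t : ℕ}
    (hS : t ∉ SwapIndices (unswap p).1 (unswap p).2) (ht : p.2 t ≤ p.1 t) :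
    p.2 (t + 1) ≤ p.1 (t + 1) := by
  have := h₂ (Nat.le_add_right t 1)
  simp only [SwapIndices, Set.mem_ofPred_eq, unswap] at hS
  split_ifs at hS <;> omega

lemma nonempty_swapIndices_unswap (h₁ : Antitone p.1) (hN : ∃ N, ∀ i, N ≤ i → p.2 i = 0)
    {j : ℕ} (hj : p.1 j + 2 ≤ p.2 j) :
    (SwapIndices (unswap p).1 (unswap p).2 ∩ Set.Ici j).Nonempty := by
  obtain ⟨N, hN⟩ := hN
  by_contra hempty
  have := propagate_of_mem_lowerBounds (fun _ => add_two_le_succ_of_notMem_swapIndices_unswap h₁)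
    (le_max_right N j) (fun t ht => absurd ⟨t, ht⟩ hempty) hj
  have := hN _ (le_max_left N j)
  omega

lemma blockSwap_unswap (h₁ : Antitone p.1) (h₂ : Antitone p.2)
    (hN : ∃ N, ∀ i, N ≤ i → p.2 i = 0) :
    blockSwap (unswap p).1 (unswap p).2 (fun r => swapChoice p r) = p := by
  set ε : {i // i ∈ SwapIndices (unswap p).1 (unswap p).2} → Bool := fun r => swapChoice p r
  have hswapped : ∀ j, p.1 j + 2 ≤ p.2 j → IsSwapped ε j := fun j hj => by
    have hr := isLeast_csInf (nonempty_swapIndices_unswap h₁ hN hj)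
    refine ⟨⟨_, hr.1.1⟩, hr, decide_eq_true ?_⟩
    exact propagate_of_mem_lowerBounds (fun _ => add_two_le_succ_of_notMem_swapIndices_unswap h₁)
      hr.1.2 hr.2 hj
  have hlt_of_swapped : ∀ j, IsSwapped ε j → p.1 j < p.2 j := by
    rintro j ⟨r, hr, hεr⟩
    by_contra! hj
    have := propagate_of_mem_lowerBounds (fun _ => le_succ_of_notMem_swapIndices_unswap h₂)
      hr.1.2 hr.2 hj
    have := of_decide_eq_true hεr
    omega
  rw [blockSwap_eq]
  ext j
  all_goals
    by_cases hs : IsSwapped ε j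
    · have := hlt_of_swapped j hs
      simp only [hs, if_true]
      simp only [unswap]
      split_ifs <;> omega
    · simp only [hs, if_false]
      simp only [unswap, mt (hswapped j) hs, if_false]

end Backward

section Counting

lemma antitone_getD_of_sortedGE {l : List ℕ} (hl : l.SortedGE) : Antitone (l.getD · 0) := by
  intro i j hij
  show l.getD j 0 ≤ l.getD i 0
  by_cases hj : j < l.length
  · rw [List.getD_eq_getElem _ _ hj, List.getD_eq_getElem _ _ (hij.trans_lt hj)]
    exact hl.antitone_get (show (⟨i, hij.trans_lt hj⟩ : Fin l.length) ≤ ⟨j, hj⟩ from hij)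
  · rw [List.getD_eq_default _ _ (not_lt.1 hj)]
    exact Nat.zero_le _

lemma finsum_getD (l : List ℕ) : ∑ᶠ i, l.getD i 0 = l.sum := by
  rw [finsum_eq_sum_of_support_subset (s := range l.length) _ fun i hi => ?_, Finset.sum_range]
  · simp only [List.getD_eq_getElem _ _ (Fin.is_lt _)]
    exact Fin.sum_univ_getElem l
  · by_contra h
    exact hi (List.getD_eq_default _ _ (by simpa using h))

lemma eq_of_getD_eq {l₁ l₂ : List ℕ} (h₁ : ∀ x ∈ l₁, 0 < x) (h₂ : ∀ x ∈ l₂, 0 < x)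
    (h : ∀ i, l₁.getD i 0 = l₂.getD i 0) : l₁ = l₂ := by
  induction l₁ generalizing l₂ with
  | nil =>
    cases l₂ with
    | nil => rfl
    | cons y ys => exact absurd (h 0) (h₂ y (.head ys)).ne
  | cons x xs ih =>
    cases l₂ with
    | nil => exact absurd (h 0) (h₁ x (.head xs)).ne'
    | cons y ys =>
      congr 1
      · exact h 0
      · exact ih (fun a ha => h₁ a (.tail x ha)) (fun a ha => h₂ a (.tail y ha)) fun i => h (i + 1)

lemma exists_sortedGE_getD_eq {f : ℕ → ℕ} (hf : IsPartitionFun f) :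
    ∃ l : List ℕ, l.SortedGE ∧ (∀ x ∈ l, 0 < x) ∧ ∀ i, l.getD i 0 = f i := by
  obtain ⟨hanti, N, hN⟩ := hf
  induction N generalizing f with
  | zero => exact ⟨[], List.Pairwise.nil.sortedGE, by simp, fun i => (hN i (Nat.zero_le i)).symm⟩
  | succ N ih =>
    obtain ⟨l, hl, hpos, hfl⟩ := ih (f := fun i => f (i + 1))
      (fun i j hij => hanti (Nat.succ_le_succ hij)) fun i hi => hN (i + 1) (Nat.succ_le_succ hi)
    rcases Nat.eq_zero_or_pos (f 0) with h0 | h0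
    · refine ⟨[], List.Pairwise.nil.sortedGE, by simp, fun i => ?_⟩
      have := hanti (Nat.zero_le i)
      simp only [List.getD_nil]
      omega
    · refine ⟨f 0 :: l, List.Pairwise.sortedGE ?_, List.forall_mem_cons.2 ⟨h0, hpos⟩, ?_⟩
      · refine List.pairwise_cons.2 ⟨fun x hx => ?_, hl.pairwise⟩
        obtain ⟨i, hi, rfl⟩ := List.mem_iff_getElem.1 hx
        rw [← List.getD_eq_getElem _ 0 hi, hfl]
        exact hanti (Nat.zero_le _)
      · rintro (_ | i)
        · rfl
        · exact hfl i

def partitionFuns (m : ℕ) : Set (ℕ → ℕ) := {f | IsPartitionFun f ∧ ∑ᶠ i, f i = m}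

noncomputable def partsFun {m : ℕ} (p : Nat.Partition m) (i : ℕ) : ℕ :=
  (p.parts.sort (· ≥ ·)).getD i 0

lemma partsFun_mem_partitionFuns {m : ℕ} (p : Nat.Partition m) :
    partsFun p ∈ partitionFuns m := by
  refine ⟨⟨antitone_getD_of_sortedGE (Multiset.pairwise_sort _ _).sortedGE, _,
    fun i hi => List.getD_eq_default _ _ hi⟩, ?_⟩
  show ∑ᶠ i, (p.parts.sort (· ≥ ·)).getD i 0 = m
  rw [finsum_getD, ← Multiset.sum_coe, Multiset.sort_eq, p.parts_sum]

lemma partsFun_injective (m : ℕ) : Injective (partsFun (m := m)) := by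
  intro p q h
  have hpos : ∀ r : Nat.Partition m, ∀ x ∈ r.parts.sort (· ≥ ·), 0 < x :=
    fun r x hx => r.parts_pos ((Multiset.mem_sort _).1 hx)
  have hsort := eq_of_getD_eq (hpos p) (hpos q) (congrFun h)
  rw [Nat.Partition.ext_iff, ← Multiset.sort_eq p.parts (· ≥ ·), hsort, Multiset.sort_eq]

lemma exists_partsFun_eq {m : ℕ} {f : ℕ → ℕ} (hf : f ∈ partitionFuns m) :
    ∃ p : Nat.Partition m, partsFun p = f := by
  obtain ⟨l, hl, hpos, hfl⟩ := exists_sortedGE_getD_eq hf.1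
  have hsum : (l : Multiset ℕ).sum = m := by
    rw [Multiset.sum_coe, ← finsum_getD, ← hf.2]
    exact finsum_congr hfl
  refine ⟨⟨l, fun hx => hpos _ (Multiset.mem_coe.1 hx), hsum⟩, funext fun i => ?_⟩
  rw [partsFun, Multiset.coe_sort, List.mergeSort_eq_self _ hl.pairwise, hfl]

noncomputable def partitionEquiv (m : ℕ) : Nat.Partition m ≃ partitionFuns m :=
  Equiv.ofBijective (fun p => ⟨partsFun p, partsFun_mem_partitionFuns p⟩)
    ⟨fun _ _ h => partsFun_injective m (congrArg Subtype.val h),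
     fun f => (exists_partsFun_eq f.2).imp fun _ hp => Subtype.ext hp⟩

instance (m : ℕ) : Finite (partitionFuns m) := Finite.of_equiv _ (partitionEquiv m)

lemma card_partitionFuns (m : ℕ) : Nat.card (partitionFuns m) = Fintype.card (Nat.Partition m) := by
  rw [← Nat.card_congr (partitionEquiv m), Nat.card_eq_fintype_card]

lemma card_partitionPairs (n : ℕ) : Nat.card (PartitionPairs n) = numPartitionPairs n := by
  let split : (Σ k : antidiagonal n, partitionFuns k.1.1 × partitionFuns k.1.2) →
      PartitionPairs n := fun x =>
    ⟨(x.2.1, x.2.2), x.2.1.2.1, x.2.2.2.1, by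
      rw [x.2.1.2.2, x.2.2.2.2]
      exact mem_antidiagonal.1 x.1.2⟩
  have hsplit : Bijective split := by
    refine ⟨?_, fun q => ?_⟩
    · rintro ⟨⟨⟨a, b⟩, hab⟩, ⟨f, hf⟩, ⟨g, hg⟩⟩ ⟨⟨⟨a', b'⟩, hab'⟩, ⟨f', hf'⟩, ⟨g', hg'⟩⟩ h
      obtain ⟨rfl, rfl⟩ := Prod.ext_iff.1 (congrArg Subtype.val h)
      obtain ⟨rfl, rfl⟩ : a = a' ∧ b = b' := ⟨hf.2.symm.trans hf'.2, hg.2.symm.trans hg'.2⟩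
      rfl
    · obtain ⟨⟨f, g⟩, hf, hg, hfg⟩ := q
      exact ⟨⟨⟨(∑ᶠ i, f i, ∑ᶠ i, g i), mem_antidiagonal.2 hfg⟩, ⟨f, hf, rfl⟩, ⟨g, hg, rfl⟩⟩, rfl⟩
  rw [← Nat.card_eq_of_bijective split hsplit, Nat.card_sigma]
  simp only [Nat.card_prod, card_partitionFuns]
  rw [sum_coe_sort (antidiagonal n)
    fun k => Fintype.card k.1.Partition * Fintype.card k.2.Partition,
    Nat.sum_antidiagonal_eq_sum_range_succ_mk]
  rfl

end Counting

noncomputable def sigmaBlockSwap (n : ℕ)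
    (pe : Σ p : ↥(DeltaSet n), ({i // i ∈ SwapIndices p.1.1 p.1.2} → Bool)) :
    (ℕ → ℕ) × (ℕ → ℕ) :=
  blockSwap pe.1.1.1 pe.1.1.2 pe.2

lemma sigmaBlockSwap_injective (n : ℕ) : Injective (sigmaBlockSwap n) := by
  rintro ⟨⟨⟨μ, ν⟩, hp⟩, ε⟩ ⟨⟨⟨μ', ν'⟩, hp'⟩, ε'⟩ h
  obtain ⟨rfl, rfl⟩ : μ = μ' ∧ ν = ν' := Prod.ext_iff.1 <|
    (unswap_blockSwap ε hp.1.2.1.1 hp.2).symm.trans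
      ((congrArg unswap h).trans (unswap_blockSwap ε' hp'.1.2.1.1 hp'.2))
  obtain rfl : ε = ε' := funext fun ⟨r, hr⟩ =>
    (swapChoice_blockSwap ε hp.1.2.1.1 hr).symm.trans
      ((congrArg (swapChoice · r) h).trans (swapChoice_blockSwap ε' hp.1.2.1.1 hr))
  rfl

lemma range_sigmaBlockSwap (n : ℕ) : Set.range (sigmaBlockSwap n) = PartitionPairs n := by
  refine Set.Subset.antisymm ?_ fun p hq => ?_
  · rintro _ ⟨⟨⟨⟨μ, ν⟩, hp⟩, ε⟩, rfl⟩
    exact blockSwap_mem_partitionPairs ε hp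
  · exact ⟨⟨⟨unswap p, unswap_mem_deltaSet hq⟩, fun r => swapChoice p r⟩,
      blockSwap_unswap hq.1.1 hq.2.1.1 hq.2.1.2⟩

end BlockSwap

/-- over all `(μ,ν) ∈ Δ`, the `2^k` pairs of partitions produced by the
block-swap construction are distinct and exhaust all pairs of partitions of total size
`n`; in particular there are `p₂(n)` of them. -/
theorem blockSwap_bijection (n : ℕ) :
    Function.Injective
      (fun pe : Σ p : ↥(DeltaSet n), ({i // i ∈ SwapIndices (p : (ℕ → ℕ) × (ℕ → ℕ)).1
          (p : (ℕ → ℕ) × (ℕ → ℕ)).2} → Bool) =>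
        blockSwap (pe.1 : (ℕ → ℕ) × (ℕ → ℕ)).1 (pe.1 : (ℕ → ℕ) × (ℕ → ℕ)).2 pe.2) ∧
    Set.range
      (fun pe : Σ p : ↥(DeltaSet n), ({i // i ∈ SwapIndices (p : (ℕ → ℕ) × (ℕ → ℕ)).1
          (p : (ℕ → ℕ) × (ℕ → ℕ)).2} → Bool) =>
        blockSwap (pe.1 : (ℕ → ℕ) × (ℕ → ℕ)).1 (pe.1 : (ℕ → ℕ) × (ℕ → ℕ)).2 pe.2)
      = PartitionPairs n ∧
    Nat.card ↥(PartitionPairs n) = numPartitionPairs n :=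
  ⟨BlockSwap.sigmaBlockSwap_injective n, BlockSwap.range_sigmaBlockSwap n,
    BlockSwap.card_partitionPairs n⟩
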